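/- (Count of minimum-weight legal paths.) Fix a circuit architecture of depth d on n qubits. The number of legal Pauli paths s = (s_0, …, s_d) with Hamming weight |s| = d + 1 equals n · 2^d · 3^{d−1}. -/

import Mathlib

/-- Labels for the four single-qubit Paulis. -/
inductive PauliLabel : Type
  | I | X | Y | Z
  deriving DecidableEq

instance instFintypePauliLabel : Fintype PauliLabel :=
  ⟨{PauliLabel.I, PauliLabel.X, PauliLabel.Y, PauliLabel.Z}, by intro x; cases x <;> simp⟩

/-- A circuit architecture of depth `d` on `n` qubits: each layer `i ∈ {1,…,d}` is a
fixed-point-free involution `M i` of the qubit set (a perfect matching); the unordered pairs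
`{j, M i j}` are the 2-qubit gates of layer `i`. -/
structure Architecture (n d : ℕ) where
  M : Fin d → Fin n → Fin n
  involutive : ∀ i j, M i (M i j) = j
  fixedPointFree : ∀ i j, M i j ≠ j

/-- A Pauli path is a tuple `s = (s_0, …, s_d)` of layers, each assigning a Pauli label to
every qubit. -/
def PauliPath (n d : ℕ) : Type := Fin (d + 1) → Fin n → PauliLabel

/-- The Hamming weight of a Pauli path: the number of pairs `(i, j)` with `s i j ≠ I`. -/
def pathWeight {n d : ℕ} (s : PauliPath n d) : ℕ :=
  (Finset.univ.filter fun p : Fin (d + 1) × Fin n => s p.1 p.2 ≠ PauliLabel.I).card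

/-- A Pauli path is legal if (1) for every layer `i ∈ {1,…,d}` and every gate `{j, M i j}`,
the input pair `(s_{i−1} j, s_{i−1} (M i j))` is `(I, I)` iff the output pair
`(s_i j, s_i (M i j))` is `(I, I)`, and (2) `s_0` and `s_d` take values only in `{I, Z}`. -/
def IsLegal {n d : ℕ} (A : Architecture n d) (s : PauliPath n d) : Prop :=
  (∀ (i : Fin d) (j : Fin n),
      ((s i.castSucc j = PauliLabel.I ∧ s i.castSucc (A.M i j) = PauliLabel.I) ↔
        (s i.succ j = PauliLabel.I ∧ s i.succ (A.M i j) = PauliLabel.I))) ∧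
  (∀ j, s 0 j = PauliLabel.I ∨ s 0 j = PauliLabel.Z) ∧
  (∀ j, s (Fin.last d) j = PauliLabel.I ∨ s (Fin.last d) j = PauliLabel.Z)


/-!
Legality propagates "layer `i` is entirely `I`" from each layer to the next, so a path of
weight `d + 1` has exactly one non-identity qubit per layer. Legality then says that this qubit
either stays put or crosses the gate of the next layer, and that both end labels are `Z`. Such a
path is thus determined by its starting qubit (`n` choices), the stay/cross decision at each of
the `d` layers (`2 ^ d`, all distinct since gates have no fixed points) and the labels `X`, `Y`,
`Z` of the `d - 1` interior layers (`3 ^ (d - 1)`).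
-/

open Finset

abbrev PauliLabel.NonIdentity : Type := {p : PauliLabel // p ≠ .I}

lemma PauliLabel.card_nonIdentity : Fintype.card PauliLabel.NonIdentity = 3 := by decide

open PauliLabel

def layerLabel {d : ℕ} (lab : Fin (d - 1) → NonIdentity) (i : Fin (d + 1)) : PauliLabel :=
  if h : (i : ℕ) = 0 ∨ (i : ℕ) = d then .Z else lab ⟨i - 1, by omega⟩

section layerLabel

variable {d : ℕ}

lemma layerLabel_ne_I (lab : Fin (d - 1) → NonIdentity) (i : Fin (d + 1)) :
    layerLabel lab i ≠ .I := by
  unfold layerLabel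
  split
  · simp
  · exact (lab _).prop

@[simp] lemma layerLabel_zero (lab : Fin (d - 1) → NonIdentity) : layerLabel lab 0 = .Z := by
  simp [layerLabel]

@[simp] lemma layerLabel_last (lab : Fin (d - 1) → NonIdentity) :
    layerLabel lab (Fin.last d) = .Z := by
  simp [layerLabel]

lemma layerLabel_interior (lab : Fin (d - 1) → NonIdentity) (k : Fin (d - 1)) :
    layerLabel lab ⟨k + 1, by have := k.isLt; omega⟩ = lab k := by
  rw [layerLabel, dif_neg (by dsimp only; omega)]
  rfl

lemma layerLabel_injective : Function.Injective (layerLabel (d := d)) := fun lab lab' h =>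
  funext fun k => Subtype.ext <| by rw [← layerLabel_interior, ← layerLabel_interior, h]

lemma exists_layerLabel_eq {ℓ : Fin (d + 1) → PauliLabel} (hℓ : ∀ i, ℓ i ≠ .I) (h₀ : ℓ 0 = .Z)
    (hlast : ℓ (Fin.last d) = .Z) : ∃ lab, layerLabel lab = ℓ := by
  refine ⟨fun k => ⟨ℓ ⟨k + 1, by have := k.isLt; omega⟩, hℓ _⟩, funext fun i => ?_⟩
  by_cases hend : (i : ℕ) = 0 ∨ (i : ℕ) = d
  · rw [layerLabel, dif_pos hend]
    rcases hend with hi | hi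
    · rw [show i = 0 from Fin.ext hi, h₀]
    · rw [show i = Fin.last d from Fin.ext hi, hlast]
  · rw [layerLabel, dif_neg hend]
    exact congrArg ℓ (Fin.ext (by dsimp only; omega))

end layerLabel

namespace Architecture

variable {n d : ℕ} (A : Architecture n d)

lemma involutive_M (i : Fin d) : Function.Involutive (A.M i) := A.involutive i

def IsTrajectory (p : Fin (d + 1) → Fin n) : Prop :=
  ∀ i : Fin d, p i.succ = p i.castSucc ∨ p i.succ = A.M i (p i.castSucc)

def walk (j₀ : Fin n) (moves : Fin d → Bool) : Fin (d + 1) → Fin n :=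
  Fin.induction j₀ fun i j => if moves i then A.M i j else j

@[simp] lemma walk_zero (j₀ : Fin n) (moves : Fin d → Bool) : A.walk j₀ moves 0 = j₀ :=
  Fin.induction_zero ..

lemma walk_succ (j₀ : Fin n) (moves : Fin d → Bool) (i : Fin d) :
    A.walk j₀ moves i.succ =
      if moves i then A.M i (A.walk j₀ moves i.castSucc) else A.walk j₀ moves i.castSucc :=
  Fin.induction_succ ..

lemma isTrajectory_walk (j₀ : Fin n) (moves : Fin d → Bool) :
    A.IsTrajectory (A.walk j₀ moves) := by
  intro i
  rw [walk_succ]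
  cases moves i <;> simp

lemma walk_succ_ne_iff (j₀ : Fin n) (moves : Fin d → Bool) (i : Fin d) :
    A.walk j₀ moves i.succ ≠ A.walk j₀ moves i.castSucc ↔ moves i = true := by
  rw [walk_succ]
  cases moves i <;> simp [A.fixedPointFree]

lemma walk_inj {j₀ j₀' : Fin n} {moves moves' : Fin d → Bool} :
    A.walk j₀ moves = A.walk j₀' moves' ↔ j₀ = j₀' ∧ moves = moves' := by
  refine ⟨fun h => ⟨by simpa using congrFun h 0, funext fun i => Bool.eq_iff_iff.mpr ?_⟩,
    fun ⟨h₀, hmoves⟩ => h₀ ▸ hmoves ▸ rfl⟩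
  rw [← walk_succ_ne_iff, ← walk_succ_ne_iff, h]

lemma IsTrajectory.exists_walk_eq {A : Architecture n d} {p : Fin (d + 1) → Fin n}
    (hp : A.IsTrajectory p) : ∃ moves, A.walk (p 0) moves = p := by
  refine ⟨fun i => decide (p i.succ ≠ p i.castSucc), funext fun i => ?_⟩
  induction i using Fin.induction with
  | zero => exact A.walk_zero ..
  | succ i ih =>
    rw [walk_succ, ih]
    by_cases hstay : p i.succ = p i.castSucc
    · simp [hstay]
    · simpa [hstay] using ((hp i).resolve_left hstay).symm

end Architecture

namespace PauliPath

variable {n d : ℕ}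

def support (s : PauliPath n d) (i : Fin (d + 1)) : Finset (Fin n) :=
  univ.filter (s i · ≠ .I)

lemma pathWeight_eq_sum_card_support (s : PauliPath n d) :
    pathWeight s = ∑ i, #(s.support i) := by
  rw [pathWeight, card_filter, Fintype.sum_prod_type]
  simp [support, card_filter]

def ofTrajectory (p : Fin (d + 1) → Fin n) (ℓ : Fin (d + 1) → PauliLabel) : PauliPath n d :=
  fun i j => if j = p i then ℓ i else .I

lemma ofTrajectory_eq_I_or_eq (p : Fin (d + 1) → Fin n) (ℓ : Fin (d + 1) → PauliLabel)
    (i : Fin (d + 1)) (j : Fin n) : ofTrajectory p ℓ i j = .I ∨ ofTrajectory p ℓ i j = ℓ i := by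
  unfold ofTrajectory
  split_ifs <;> simp

variable {p p' : Fin (d + 1) → Fin n} {ℓ ℓ' : Fin (d + 1) → PauliLabel}

lemma ofTrajectory_eq_I_iff (hℓ : ∀ i, ℓ i ≠ .I) (i : Fin (d + 1)) (j : Fin n) :
    ofTrajectory p ℓ i j = .I ↔ j ≠ p i := by
  by_cases h : j = p i <;> simp [ofTrajectory, h, hℓ]

lemma pathWeight_ofTrajectory (hℓ : ∀ i, ℓ i ≠ .I) : pathWeight (ofTrajectory p ℓ) = d + 1 := by
  have hsupp : ∀ i, (ofTrajectory p ℓ).support i = {p i} := fun i => by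
    ext j
    simp [support, ofTrajectory_eq_I_iff hℓ]
  simp [pathWeight_eq_sum_card_support, hsupp]

lemma ofTrajectory_injective (hℓ : ∀ i, ℓ i ≠ .I)
    (h : ofTrajectory p ℓ = ofTrajectory p' ℓ') : p = p' ∧ ℓ = ℓ' := by
  have hp : p = p' := funext fun i => by
    have hpi := congrFun (congrFun h i) (p i)
    by_contra hne
    simp [ofTrajectory, hne, hℓ] at hpi
  subst hp
  refine ⟨rfl, funext fun i => ?_⟩
  simpa [ofTrajectory] using congrFun (congrFun h i) (p i)

lemma isLegal_ofTrajectory (A : Architecture n d) (hp : A.IsTrajectory p) (hℓ : ∀ i, ℓ i ≠ .I)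
    (h₀ : ℓ 0 = .Z) (hlast : ℓ (Fin.last d) = .Z) : IsLegal A (ofTrajectory p ℓ) := by
  refine ⟨fun i j => ?_, fun j => ?_, fun j => ?_⟩
  · simp only [ofTrajectory_eq_I_iff hℓ]
    rcases hp i with hstay | hcross
    · rw [hstay]
    · -- crossing the gate `{j, M i j}` maps it to itself
      have hgate : A.M i j = p i.castSucc ↔ j = A.M i (p i.castSucc) := (A.involutive_M i).eq_iff
      have hinj : A.M i j = A.M i (p i.castSucc) ↔ j = p i.castSucc :=
        (A.involutive_M i).injective.eq_iff
      rw [hcross]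
      tauto
  · exact h₀ ▸ ofTrajectory_eq_I_or_eq p ℓ 0 j
  · exact hlast ▸ ofTrajectory_eq_I_or_eq p ℓ (Fin.last d) j

end PauliPath

open PauliPath

namespace IsLegal

variable {n d : ℕ} {A : Architecture n d} {s : PauliPath n d}

lemma support_eq_empty_iff (hs : IsLegal A s) (i : Fin (d + 1)) :
    s.support i = ∅ ↔ s.support 0 = ∅ := by
  simp only [support, filter_eq_empty_iff, mem_univ, true_implies, not_not]
  induction i using Fin.induction with
  | zero => rfl
  | succ i ih =>
    rw [← ih]
    exact ⟨fun h j => ((hs.1 i j).mpr ⟨@h j, @h _⟩).1, fun h j => ((hs.1 i j).mp ⟨@h j, @h _⟩).1⟩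

lemma card_support_eq_one (hs : IsLegal A s) (hw : pathWeight s = d + 1)
    (i : Fin (d + 1)) : #(s.support i) = 1 := by
  have hne : ∀ i, (s.support i).Nonempty := by
    by_contra! hempty
    obtain ⟨i₀, hi₀⟩ := hempty
    have hzero : ∀ i, s.support i = ∅ := fun i =>
      (hs.support_eq_empty_iff i).mpr ((hs.support_eq_empty_iff i₀).mp hi₀)
    simp [pathWeight_eq_sum_card_support, hzero] at hw
  have hsum : ∑ _i : Fin (d + 1), 1 = ∑ i, #(s.support i) := by
    simp [← pathWeight_eq_sum_card_support, hw]
  exact ((sum_eq_sum_iff_of_le fun i _ => (hne i).card_pos).mp hsum i (mem_univ i)).symm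

lemma exists_eq_ofTrajectory (hs : IsLegal A s) (hw : pathWeight s = d + 1) :
    ∃ p ℓ, A.IsTrajectory p ∧ (∀ i, ℓ i ≠ .I) ∧ ℓ 0 = .Z ∧ ℓ (Fin.last d) = .Z ∧
      s = ofTrajectory p ℓ := by
  choose p hp using fun i => card_eq_one.mp (hs.card_support_eq_one hw i)
  have hsupp : ∀ i j, s i j ≠ .I ↔ j = p i := fun i j => by
    rw [← mem_singleton, ← hp i]
    simp [support]
  have hℓ : ∀ i, s i (p i) ≠ .I := fun i => (hsupp i _).mpr rfl
  have hI : ∀ i j, j ≠ p i → s i j = .I := fun i j hj => not_ne_iff.mp (mt (hsupp i j).mp hj)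
  have hs_eq : s = ofTrajectory p fun i => s i (p i) := funext fun i => funext fun j => by
    by_cases hj : j = p i
    · simp [ofTrajectory, hj]
    · simp [ofTrajectory, hj, hI i j hj]
  have hendpoint : ∀ i, (s i (p i) = .I ∨ s i (p i) = .Z) → s i (p i) = .Z :=
    fun i h => h.resolve_left (hℓ i)
  refine ⟨p, _, fun i => ?_, hℓ, hendpoint 0 (hs.2.1 _), hendpoint _ (hs.2.2 _), hs_eq⟩
  -- otherwise the layer-`i` gate at `p i.succ` would be idle before it and busy after it
  by_contra! hfar
  have hleave : s i.castSucc (p i.succ) = .I ∧ s i.castSucc (A.M i (p i.succ)) = .I :=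
    ⟨hI _ _ hfar.1, hI _ _ fun h => hfar.2 ((A.involutive_M i).eq_iff.mp h)⟩
  exact hℓ i.succ ((hs.1 i _).mp hleave).1

end IsLegal

theorem count_min_weight_legal_paths_general (n d : ℕ) (A : Architecture n d) :
    Nat.card {s : PauliPath n d // IsLegal A s ∧ pathWeight s = d + 1}
      = n * 2 ^ d * 3 ^ (d - 1) := by
  let encode : Fin n × (Fin d → Bool) × (Fin (d - 1) → NonIdentity) →
      {s : PauliPath n d // IsLegal A s ∧ pathWeight s = d + 1} := fun P =>
    ⟨ofTrajectory (A.walk P.1 P.2.1) (layerLabel P.2.2),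
      isLegal_ofTrajectory A (A.isTrajectory_walk _ _) (layerLabel_ne_I _) (layerLabel_zero _)
        (layerLabel_last _),
      pathWeight_ofTrajectory (layerLabel_ne_I _)⟩
  have hinj : Function.Injective encode := by
    rintro ⟨j₀, moves, lab⟩ ⟨j₀', moves', lab'⟩ h
    obtain ⟨hwalk, hlabel⟩ := ofTrajectory_injective (layerLabel_ne_I _) (congrArg Subtype.val h)
    obtain ⟨hj₀, hmoves⟩ := A.walk_inj.mp hwalk
    exact Prod.ext hj₀ (Prod.ext hmoves (layerLabel_injective hlabel))
  have hsurj : Function.Surjective encode := by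
    rintro ⟨s, hs, hw⟩
    obtain ⟨p, ℓ, hp, hℓ, h₀, hlast, rfl⟩ := hs.exists_eq_ofTrajectory hw
    obtain ⟨moves, hmoves⟩ := hp.exists_walk_eq
    obtain ⟨lab, hlab⟩ := exists_layerLabel_eq hℓ h₀ hlast
    exact ⟨(p 0, moves, lab), by simp [encode, hmoves, hlab]⟩
  rw [← Nat.card_eq_of_bijective encode ⟨hinj, hsurj⟩]
  simp only [Nat.card_eq_fintype_card, Fintype.card_prod, Fintype.card_fun, Fintype.card_fin,
    Fintype.card_bool, card_nonIdentity]
  ring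

/-- The number of legal Pauli paths of Hamming weight exactly `d + 1` equals
`n · 2^d · 3^{d−1}`. -/
theorem count_min_weight_legal_paths (n d : ℕ) (hn : Even n) (hn0 : 0 < n) (hd : 1 ≤ d)
    (A : Architecture n d) :
    Nat.card {s : PauliPath n d // IsLegal A s ∧ pathWeight s = d + 1}
      = n * 2 ^ d * 3 ^ (d - 1) :=
  count_min_weight_legal_paths_general n d A
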